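/- Identify ℝ² with ℂ. Let d_1,…,d_{12} be the points 0, i, 2i, 3i, 3, 3+i, 3+2i, 3+3i, 4+3i, 5+3i, 6+3i, 7+3i, let f_k(x) = (x + d_k)/4 for 1 ≤ k ≤ 12, and let E₃ be the unique nonempty compact subset of ℝ² with E₃ = ⋃_{k=1}^{12} f_k(E₃). Let K ⊆ ℝ be the 1/4-Cantor set, i.e. the unique nonempty compact set with K = (K/4) ∪ ((K+3)/4), and let C = {u + v·i : u ∈ K, 0 ≤ v ≤ 1}. Then C ⊆ E₃, and for every integer k ≥ 1 the vertical segment B_k = {1 − 4^{−k}·(3/8) + t·i : 0 ≤ t ≤ 1} is disjoint from E₃. -/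

import Mathlib

open Complex

/-- The twelve digits `0, i, 2i, 3i, 3, 3+i, 3+2i, 3+3i, 4+3i, 5+3i, 6+3i, 7+3i`. -/
noncomputable def d12 : Fin 12 → ℂ :=
  ![0, I, 2 * I, 3 * I, 3, 3 + I, 3 + 2 * I, 3 + 3 * I,
    4 + 3 * I, 5 + 3 * I, 6 + 3 * I, 7 + 3 * I]

/-- The maps `f_k(x) = (x + d_k)/4`. -/
noncomputable def f12 (k : Fin 12) (x : ℂ) : ℂ := (x + d12 k) / 4

/-!
Both parts are instances of one principle: a compact set `S` covered by its images under
contractions `fᵢ` of ratio `c < 1` lies in every nonempty closed set `T` with `fᵢ(T) ⊆ T`, since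
at a point of `S` farthest from `T` the distance to `T` is at most `c` times itself.

The strip `C` is covered by its images under the eight maps `f₁, …, f₈` (the column `0` or `3`
comes from the Cantor set, the row `0, …, 3` from the unit interval), so `C ⊆ E₃`.
For the segments, the real parts of the digits are `0, 3, 4, 5, 6, 7`, and the set
`e3GapComplement` of points of `[0, 7/3]` outside the gaps `(1 - 5/12 · 4⁻ᵏ, 1 - 1/4 · 4⁻ᵏ)`
is invariant under the maps `x ↦ (x + a)/4`: the gaps lie in `(7/12, 1)`, which only
`x ↦ (x + 3)/4` can reach, and that map sends the `k`-th gap onto the `(k+1)`-st. Hence the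
real parts of `E₃` avoid the gaps, and `B_k` lies over the `k`-th gap.
-/

open Metric Set

section Contraction

variable {X : Type*} [PseudoMetricSpace X]

theorem LipschitzWith.infDist_le_mul_of_mapsTo {f : X → X} {c : NNReal} (hf : LipschitzWith c f)
    {T : Set X} (hT : MapsTo f T T) (x : X) : infDist (f x) T ≤ c * infDist x T := by
  rcases T.eq_empty_or_nonempty with rfl | hT₀
  · simp
  have : Nonempty T := hT₀.to_subtype
  rw [infDist_eq_iInf (x := x), Real.mul_iInf_of_nonneg c.coe_nonneg]
  exact le_ciInf fun y => (infDist_le_dist_of_mem (hT y.2)).trans (hf.dist_le_mul x y)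

theorem subset_of_subset_iUnion_image_of_mapsTo {ι : Type*} {f : ι → X → X} {c : NNReal}
    (hc : c < 1) (hf : ∀ i, LipschitzWith c (f i)) {S T : Set X} (hS : IsCompact S)
    (hSf : S ⊆ ⋃ i, f i '' S) (hT : IsClosed T) (hT₀ : T.Nonempty)
    (hTf : ∀ i, MapsTo (f i) T T) : S ⊆ T := by
  rcases S.eq_empty_or_nonempty with rfl | hS₀
  · exact empty_subset T
  obtain ⟨x₀, hx₀, hmax⟩ := hS.exists_isMaxOn hS₀ (continuous_infDist_pt T).continuousOn
  obtain ⟨i, x, hx, rfl⟩ : ∃ i, ∃ x ∈ S, f i x = x₀ := by simpa using hSf hx₀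
  have hzero : infDist (f i x) T = 0 := by
    have hle : infDist (f i x) T ≤ c * infDist (f i x) T :=
      ((hf i).infDist_le_mul_of_mapsTo (hTf i) x).trans
        (mul_le_mul_of_nonneg_left (hmax hx) c.coe_nonneg)
    have hc' : (c : ℝ) < 1 := hc
    nlinarith [infDist_nonneg (x := f i x) (s := T)]
  intro y hy
  exact (hT.mem_iff_infDist_zero hT₀).2 (le_antisymm (hzero ▸ hmax hy) infDist_nonneg)

end Contraction

theorem lipschitzWith_f12 (k : Fin 12) : LipschitzWith 4⁻¹ (f12 k) := by
  refine LipschitzWith.of_dist_le_mul fun x y => ?_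
  have h : f12 k x - f12 k y = (x - y) / 4 := by simp only [f12]; ring
  rw [Complex.dist_eq, Complex.dist_eq, h, norm_div]
  norm_num [div_eq_inv_mul]

theorem mapsTo_f12_of_eq_iUnion_image {E : Set ℂ} (hE : E = ⋃ k : Fin 12, f12 k '' E)
    (k : Fin 12) : MapsTo (f12 k) E E :=
  mapsTo_iff_image_subset.2 ((subset_iUnion (fun k => f12 k '' E) k).trans hE.ge)

theorem exists_d12_eq (a : Fin 2) (j : Fin 4) : ∃ k, d12 k = 3 * (a : ℂ) + (j : ℂ) * I := by
  refine ⟨⟨4 * a + j, by omega⟩, ?_⟩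
  fin_cases a <;> fin_cases j <;> simp [d12]

theorem exists_fin_four_eq_add_div_four {v : ℝ} (hv : v ∈ Icc (0 : ℝ) 1) :
    ∃ j : Fin 4, ∃ v' ∈ Icc (0 : ℝ) 1, v = (v' + j) / 4 := by
  obtain ⟨hv0, hv1⟩ := hv
  refine ⟨⟨min ⌊4 * v⌋₊ 3, by omega⟩, 4 * v - (min ⌊4 * v⌋₊ 3 : ℕ), ?_, by ring⟩
  rcases le_total ⌊4 * v⌋₊ 3 with h | h
  · rw [min_eq_left h]
    have := Nat.floor_le (by positivity : 0 ≤ 4 * v)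
    have := Nat.lt_floor_add_one (4 * v)
    constructor <;> linarith
  · rw [min_eq_right h]
    have : (3 : ℝ) ≤ 4 * v := (Nat.cast_le.2 h).trans (Nat.floor_le (by positivity))
    push_cast
    constructor <;> linarith

theorem exists_fin_two_eq_of_mem {K : Set ℝ}
    (hK : K = (fun x : ℝ => x / 4) '' K ∪ (fun x : ℝ => (x + 3) / 4) '' K) {u : ℝ} (hu : u ∈ K) :
    ∃ a : Fin 2, ∃ u' ∈ K, u = (u' + 3 * a) / 4 := by
  rw [hK] at hu
  rcases hu with ⟨u', hu', rfl⟩ | ⟨u', hu', rfl⟩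
  exacts [⟨0, u', hu', by simp⟩, ⟨1, u', hu', by simp⟩]

theorem image2_subset_iUnion_f12_image {K : Set ℝ}
    (hK : K = (fun x : ℝ => x / 4) '' K ∪ (fun x : ℝ => (x + 3) / 4) '' K) :
    image2 (fun u v : ℝ => (u : ℂ) + (v : ℂ) * I) K (Icc 0 1) ⊆
      ⋃ k, f12 k '' image2 (fun u v : ℝ => (u : ℂ) + (v : ℂ) * I) K (Icc 0 1) := by
  rintro _ ⟨u, hu, v, hv, rfl⟩
  obtain ⟨a, u', hu', rfl⟩ := exists_fin_two_eq_of_mem hK hu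
  obtain ⟨j, v', hv', rfl⟩ := exists_fin_four_eq_add_div_four hv
  obtain ⟨k, hk⟩ := exists_d12_eq a j
  refine mem_iUnion.2 ⟨k, _, mem_image2_of_mem hu' hv', ?_⟩
  rw [f12, hk]
  push_cast
  ring

def e3Gap (k : ℕ) : Set ℝ := Ioo (1 - 5 / 12 * 4⁻¹ ^ k) (1 - 1 / 4 * 4⁻¹ ^ k)

theorem e3Gap_subset_Ioo (k : ℕ) : e3Gap k ⊆ Ioo (7 / 12) 1 := by
  rintro x ⟨h₁, h₂⟩
  have : (0 : ℝ) < 4⁻¹ ^ k := by positivity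
  have : (4⁻¹ : ℝ) ^ k ≤ 1 := pow_le_one₀ (by norm_num) (by norm_num)
  constructor <;> linarith

theorem add_three_div_four_mem_e3Gap_succ {x : ℝ} {k : ℕ} :
    (x + 3) / 4 ∈ e3Gap (k + 1) ↔ x ∈ e3Gap k := by
  simp only [e3Gap, mem_Ioo, pow_succ]
  constructor <;> rintro ⟨h₁, h₂⟩ <;> constructor <;> linarith

def e3GapComplement : Set ℝ := Icc 0 (7 / 3) \ ⋃ k, e3Gap k

theorem mapsTo_e3GapComplement {a : ℝ} (ha : a ∈ ({0, 3, 4, 5, 6, 7} : Set ℝ)) :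
    MapsTo (fun x => (x + a) / 4) e3GapComplement e3GapComplement := by
  rintro x ⟨⟨h₀, h₇⟩, hx⟩
  have ha₀₇ : 0 ≤ a ∧ a ≤ 7 := by
    simp only [mem_insert_iff, mem_singleton_iff] at ha
    rcases ha with rfl | rfl | rfl | rfl | rfl | rfl <;> norm_num
  refine ⟨⟨by linarith, by linarith⟩, ?_⟩
  simp only [mem_iUnion, not_exists]
  intro k hk
  have hk' := e3Gap_subset_Ioo k hk
  rcases ha with rfl | rfl | ha
  · linarith [hk'.1]
  · cases k with
    | zero =>
      simp only [e3Gap, pow_zero, mem_Ioo] at hk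
      linarith
    | succ k => exact hx (mem_iUnion.2 ⟨k, add_three_div_four_mem_e3Gap_succ.1 hk⟩)
  · have : 4 ≤ a := by
      simp only [mem_insert_iff, mem_singleton_iff] at ha
      rcases ha with rfl | rfl | rfl | rfl <;> norm_num
    linarith [hk'.2]

theorem isClosed_e3GapComplement : IsClosed e3GapComplement :=
  isClosed_Icc.sdiff (isOpen_iUnion fun _ => isOpen_Ioo)

theorem zero_mem_e3GapComplement : (0 : ℝ) ∈ e3GapComplement :=
  ⟨⟨le_rfl, by norm_num⟩, by simpa using fun k hk => (e3Gap_subset_Ioo k hk).1.not_gt (by norm_num)⟩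

theorem re_d12_mem (k : Fin 12) : (d12 k).re ∈ ({0, 3, 4, 5, 6, 7} : Set ℝ) := by
  fin_cases k <;> simp [d12]

theorem re_f12 (k : Fin 12) (z : ℂ) : (f12 k z).re = (z.re + (d12 k).re) / 4 := by
  simp [f12]

theorem mapsTo_f12_preimage_re (k : Fin 12) :
    MapsTo (f12 k) (re ⁻¹' e3GapComplement) (re ⁻¹' e3GapComplement) := fun z hz => by
  simpa only [mem_preimage, re_f12] using mapsTo_e3GapComplement (re_d12_mem k) hz

theorem one_sub_mul_three_eighths_mem_e3Gap (k : ℕ) :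
    1 - (4 : ℝ) ^ (-(k : ℤ)) * (3 / 8) ∈ e3Gap k := by
  rw [zpow_neg, zpow_natCast, ← inv_pow]
  have : (0 : ℝ) < 4⁻¹ ^ k := by positivity
  constructor <;> linarith

theorem E3_contains_cantor_strip_and_avoids_segments_general
    (E₃ : Set ℂ) (hne : E₃.Nonempty) (hc : IsCompact E₃)
    (hE : E₃ = ⋃ k : Fin 12, f12 k '' E₃)
    (K : Set ℝ) (hKc : IsCompact K)
    (hK : K = (fun x : ℝ => x / 4) '' K ∪ (fun x : ℝ => (x + 3) / 4) '' K) :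
    Set.image2 (fun u v : ℝ => (u : ℂ) + (v : ℂ) * I) K (Set.Icc (0 : ℝ) 1) ⊆ E₃
    ∧ ∀ k : ℕ, 1 ≤ k →
        (fun t : ℝ => (((1 - (4 : ℝ) ^ (-(k : ℤ)) * (3 / 8) : ℝ)) : ℂ) + (t : ℂ) * I) ''
            Set.Icc (0 : ℝ) 1 ∩ E₃ = ∅ := by
  refine ⟨?_, fun k _ => ?_⟩
  · have hstrip : IsCompact (image2 (fun u v : ℝ => (u : ℂ) + (v : ℂ) * I) K (Icc 0 1)) := by
      rw [← image_prod]
      exact (hKc.prod isCompact_Icc).image (by fun_prop)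
    exact subset_of_subset_iUnion_image_of_mapsTo (by norm_num) lipschitzWith_f12 hstrip
      (image2_subset_iUnion_f12_image hK) hc.isClosed hne (mapsTo_f12_of_eq_iUnion_image hE)
  · have hre : E₃ ⊆ re ⁻¹' e3GapComplement :=
      subset_of_subset_iUnion_image_of_mapsTo (by norm_num) lipschitzWith_f12 hc hE.le
        (isClosed_e3GapComplement.preimage continuous_re) ⟨0, zero_mem_e3GapComplement⟩
        mapsTo_f12_preimage_re
    refine eq_empty_of_forall_notMem ?_
    rintro _ ⟨⟨t, -, rfl⟩, hz⟩
    refine (hre hz).2 (mem_iUnion.2 ⟨k, ?_⟩)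
    simpa only [mem_preimage, add_re, ofReal_re, mul_I_re, ofReal_im, neg_zero, add_zero]
      using one_sub_mul_three_eighths_mem_e3Gap k

/-- Let `E₃` be the attractor of the twelve maps `f_k`, let `K`
be the 1/4-Cantor set and `C = {u + v·i : u ∈ K, 0 ≤ v ≤ 1}`. Then `C ⊆ E₃`, and
for every `k ≥ 1` the vertical segment `B_k = {1 - 4^{-k}·(3/8) + t·i : 0 ≤ t ≤ 1}`
is disjoint from `E₃`. -/
theorem E3_contains_cantor_strip_and_avoids_segments
    (E₃ : Set ℂ) (hne : E₃.Nonempty) (hc : IsCompact E₃)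
    (hE : E₃ = ⋃ k : Fin 12, f12 k '' E₃)
    (K : Set ℝ) (hKne : K.Nonempty) (hKc : IsCompact K)
    (hK : K = (fun x : ℝ => x / 4) '' K ∪ (fun x : ℝ => (x + 3) / 4) '' K) :
    Set.image2 (fun u v : ℝ => (u : ℂ) + (v : ℂ) * I) K (Set.Icc (0 : ℝ) 1) ⊆ E₃
    ∧ ∀ k : ℕ, 1 ≤ k →
        (fun t : ℝ => (((1 - (4 : ℝ) ^ (-(k : ℤ)) * (3 / 8) : ℝ)) : ℂ) + (t : ℂ) * I) ''
            Set.Icc (0 : ℝ) 1 ∩ E₃ = ∅ :=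
  E3_contains_cantor_strip_and_avoids_segments_general E₃ hne hc hE K hKc hK
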